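/- Let S be a finite linearly ordered set and suppose A ≥ B in the Gale order on the power set of S, where |A| = |B|, and let σ = σ_{A,B} be the shuffle. If C ⊆ S satisfies C ≥ A in the Gale order on the power set of S, then C ≥ A in the Gale order on the power set of S_σ (the set S with linear order transported by σ). -/

import Mathlib

/-!
In counting form, `A ≤ B` in the Gale order iff `|B| ≤ |A|` and every initial segment
`{y ≤ x}` contains at most as many points of `B` as of `A`. As `B ≤ A`, the shuffle moves no
point outside `B` upwards, which gives `|A ∩ {y ≤ σ x}| ≤ |B ∩ {y ≤ x}|` for every `x`.
An initial segment of `S_σ` is `σ {y ≤ t}`; it contains `|B ∩ {y ≤ t}|` points of `A`, and each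
of its points `c` has `|A ∩ {y ≤ c}| ≤ |B ∩ {y ≤ t}|`, so applying `A ≤ C` at the largest point
of `C` in it bounds its number of points of `C` by the same quantity.
-/

/-- The Gale order on subsets of a finite set, relative to an explicitly given linear
order `L`: for `A = {a₁ <L ⋯ <L a_k}` and `B = {b₁ <L ⋯ <L b_r}`, `A ≤ B` iff `r ≤ k`
and `aᵢ ≤L bᵢ` for `1 ≤ i ≤ r`. -/
def galeL {α : Type*} (L : LinearOrder α) (A B : Finset α) : Prop :=
  B.card ≤ A.card ∧ ∀ (i : ℕ) (hA : i < A.card) (hB : i < B.card),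
    L.le ((@Finset.orderEmbOfFin α L A A.card rfl) ⟨i, hA⟩)
         ((@Finset.orderEmbOfFin α L B B.card rfl) ⟨i, hB⟩)

open Finset

section GaleCount
variable {α : Type*} [LinearOrder α]

theorem Finset.orderEmbOfFin_le_iff_lt_card_filter (s : Finset α) {k : ℕ} (h : #s = k)
    (i : Fin k) (x : α) : s.orderEmbOfFin h i ≤ x ↔ (i : ℕ) < #{a ∈ s | a ≤ x} := by
  set e := s.orderEmbOfFin h
  have hcard : #{a ∈ s | a ≤ x} = #{j | e j ≤ x} := by
    rw [← card_map e.toEmbedding]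
    congr 1
    ext a
    simp only [mem_filter, mem_map, mem_univ, true_and, ← mem_coe (s := s),
      ← range_orderEmbOfFin s h, Set.mem_range]
    exact ⟨fun ⟨⟨j, hj⟩, hx⟩ => ⟨j, hj ▸ hx, hj⟩, fun ⟨j, hx, hj⟩ => ⟨⟨j, hj⟩, hj ▸ hx⟩⟩
  rw [hcard]
  constructor
  · intro hi
    calc (i : ℕ) < #(Iic i) := by simp
      _ ≤ _ := card_le_card fun j hj => by simpa using (e.monotone (mem_Iic.1 hj)).trans hi
  · intro hi
    by_contra! hx
    have hsub : ({j | e j ≤ x} : Finset (Fin k)) ⊆ Iio i := fun j hj => by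
      simp only [mem_filter, mem_univ, true_and, mem_Iio] at hj ⊢
      exact e.lt_iff_lt.1 (hj.trans_lt hx)
    exact (card_le_card hsub).not_gt (by simpa using hi)

theorem galeL_iff_card_filter_le {A B : Finset α} :
    galeL inferInstance A B ↔ #B ≤ #A ∧ ∀ x, #{b ∈ B | b ≤ x} ≤ #{a ∈ A | a ≤ x} := by
  refine and_congr_right fun _ => ⟨fun h x => ?_, fun h i hA hB => ?_⟩
  · set j := #{b ∈ B | b ≤ x}
    obtain hj0 | hjpos := Nat.eq_zero_or_pos j
    · simp [hj0]
    have hjB : j - 1 < #B := by have := card_filter_le B (· ≤ x); omega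
    have hb : B.orderEmbOfFin rfl ⟨j - 1, hjB⟩ ≤ x :=
      (orderEmbOfFin_le_iff_lt_card_filter B rfl _ x).2 (by simp only; omega)
    have ha := (orderEmbOfFin_le_iff_lt_card_filter A rfl ⟨j - 1, by omega⟩ x).1
      ((h _ _ hjB).trans hb)
    simp only at ha
    omega
  · change A.orderEmbOfFin rfl ⟨i, hA⟩ ≤ B.orderEmbOfFin rfl ⟨i, hB⟩
    rw [orderEmbOfFin_le_iff_lt_card_filter]
    exact ((orderEmbOfFin_le_iff_lt_card_filter B rfl ⟨i, hB⟩ _).1 le_rfl).trans_le (h _)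

theorem card_filter_le_mono (s : Finset α) {x y : α} (h : x ≤ y) :
    #{a ∈ s | a ≤ x} ≤ #{a ∈ s | a ≤ y} :=
  card_le_card <| monotone_filter_right s fun _ _ ha => ha.trans h

theorem card_le_of_forall_card_filter_le {A C D : Finset α}
    (hAC : ∀ x, #{c ∈ C | c ≤ x} ≤ #{a ∈ A | a ≤ x}) (hD : D ⊆ C) {j : ℕ}
    (h : ∀ c ∈ D, #{a ∈ A | a ≤ c} ≤ j) : #D ≤ j := by
  obtain rfl | hne := D.eq_empty_or_nonempty
  · simp
  calc #D ≤ #{c ∈ C | c ≤ D.max' hne} :=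
        card_le_card fun c hc => mem_filter.2 ⟨hD hc, D.le_max' c hc⟩
    _ ≤ #{a ∈ A | a ≤ D.max' hne} := hAC _
    _ ≤ j := h _ (D.max'_mem hne)

end GaleCount

theorem Finset.eq_map_of_image_coe_eq {α β : Type*} {f : α ↪ β} {s : Finset α} {t : Finset β}
    (h : f '' s = t) : t = s.map f :=
  coe_injective (by simpa using h.symm)

section Shuffle
variable {α : Type*} [LinearOrder α] {σ : Equiv.Perm α}

theorem Equiv.Perm.card_filter_le_apply_eq {s t : Finset α} (hmap : σ '' s = t)
    (hmono : MonotoneOn σ s) {x : α} (hx : x ∈ s) :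
    #{y ∈ t | y ≤ σ x} = #{y ∈ s | y ≤ x} := by
  have hst : StrictMonoOn σ s := hmono.strictMonoOn_of_injOn σ.injective.injOn
  rw [eq_map_of_image_coe_eq (f := σ.toEmbedding) hmap, filter_map, card_map]
  exact congrArg card (filter_congr fun y hy => hst.le_iff_le hy hx)

variable [Fintype α] {A B : Finset α}

theorem card_filter_le_add_card_compl_filter_le (A : Finset α) (x : α) :
    #{a ∈ A | a ≤ x} + #{a ∈ Aᶜ | a ≤ x} = #{a | a ≤ x} := by
  rw [← card_union_of_disjoint (disjoint_filter_filter disjoint_compl_right), ← filter_union,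
    union_compl]

/-- `B ≤ A` in the Gale order reverses on complements, while `σ` matches the initial segments
of `Bᶜ` and `Aᶜ` ending at `x` and at `σ x`. -/
theorem Equiv.Perm.apply_le_of_notMem (hgale : ∀ x, #{a ∈ A | a ≤ x} ≤ #{b ∈ B | b ≤ x})
    (hmap' : σ '' (↑B)ᶜ = (↑A)ᶜ) (hmono' : MonotoneOn σ (↑B)ᶜ) {x : α} (hx : x ∉ B) :
    σ x ≤ x := by
  by_contra! hlt
  have hσx : σ x ∈ Aᶜ := by
    have h : σ x ∈ σ '' (↑B)ᶜ := Set.mem_image_of_mem σ hx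
    rw [hmap'] at h
    simpa using h
  have hcompl := card_filter_le_apply_eq (s := Bᶜ) (t := Aᶜ) (by simpa using hmap')
    (by simpa using hmono') (mem_compl.2 hx)
  have hlt' : #{y ∈ Aᶜ | y ≤ x} < #{y ∈ Aᶜ | y ≤ σ x} := by
    refine card_lt_card ((ssubset_iff_of_subset ?_).2 ⟨σ x, ?_, ?_⟩)
    · exact monotone_filter_right _ fun _ _ hy => hy.trans hlt.le
    · simpa using hσx
    · simp [hlt]
  have hsplitA := card_filter_le_add_card_compl_filter_le A x
  have hsplitB := card_filter_le_add_card_compl_filter_le B x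
  have := hgale x
  omega

theorem Equiv.Perm.card_filter_le_apply_le (hgale : ∀ x, #{a ∈ A | a ≤ x} ≤ #{b ∈ B | b ≤ x})
    (hmap : σ '' B = A) (hmono : MonotoneOn σ B)
    (hmap' : σ '' (↑B)ᶜ = (↑A)ᶜ) (hmono' : MonotoneOn σ (↑B)ᶜ) (x : α) :
    #{a ∈ A | a ≤ σ x} ≤ #{b ∈ B | b ≤ x} := by
  by_cases hx : x ∈ B
  · exact (card_filter_le_apply_eq hmap hmono hx).le
  · exact (card_filter_le_mono A (apply_le_of_notMem hgale hmap' hmono' hx)).trans (hgale x)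

end Shuffle

theorem gale_shuffle_transport_general {α : Type*} [Fintype α] [LinearOrder α]
    (A B C : Finset α)
    (hBA : galeL inferInstance B A)
    (σ : Equiv.Perm α)
    (hmap : Set.image σ ↑B = (↑A : Set α))
    (hmono : ∀ x ∈ B, ∀ y ∈ B, x ≤ y → σ x ≤ σ y)
    (hmap' : Set.image σ (↑B : Set α)ᶜ = (↑A : Set α)ᶜ)
    (hmono' : ∀ x ∉ B, ∀ y ∉ B, x ≤ y → σ x ≤ σ y)
    (hAC : galeL inferInstance A C) :
    galeL (LinearOrder.lift' (fun x => σ.symm x) σ.symm.injective) A C := by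
  rw [galeL_iff_card_filter_le] at hBA hAC
  rw [@galeL_iff_card_filter_le _ (LinearOrder.lift' (fun x => σ.symm x) σ.symm.injective)]
  refine ⟨hAC.1, fun x => ?_⟩
  change #{c ∈ C | σ.symm c ≤ σ.symm x} ≤ #{a ∈ A | σ.symm a ≤ σ.symm x}
  calc #{c ∈ C | σ.symm c ≤ σ.symm x} ≤ #{b ∈ B | b ≤ σ.symm x} := by
        refine card_le_of_forall_card_filter_le hAC.2 (filter_subset _ C) fun c hc => ?_
        have hshuffle := σ.card_filter_le_apply_le hBA.2 hmap hmono hmap' hmono' (σ.symm c)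
        rw [Equiv.apply_symm_apply] at hshuffle
        exact hshuffle.trans (card_filter_le_mono B (mem_filter.1 hc).2)
    _ = #{a ∈ A | σ.symm a ≤ σ.symm x} := by
        rw [eq_map_of_image_coe_eq (f := σ.toEmbedding) hmap, filter_map, card_map]
        simp

/-- Let `S` be a finite linearly ordered set, `A ≥ B` in the Gale order
with `|A| = |B|`, and let `σ = σ_{A,B}` be the shuffle: the unique permutation of `S`
mapping `B` onto `A` (hence the complement of `B` onto the complement of `A`) whose
restrictions to `B` and to its complement are order-preserving.  If `C ⊆ S` satisfies
`C ≥ A` in the Gale order, then `C ≥ A` in the Gale order of `S_σ`, the set `S` with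
the order transported by `σ` (i.e. `x ≤ y` in `S_σ` iff `σ⁻¹ x ≤ σ⁻¹ y`). -/
theorem gale_shuffle_transport {α : Type*} [Fintype α] [LinearOrder α]
    (A B C : Finset α) (hcard : A.card = B.card)
    (hBA : galeL inferInstance B A)
    (σ : Equiv.Perm α)
    (hmap : Set.image σ ↑B = (↑A : Set α))
    (hmono : ∀ x ∈ B, ∀ y ∈ B, x ≤ y → σ x ≤ σ y)
    (hmap' : Set.image σ (↑B : Set α)ᶜ = (↑A : Set α)ᶜ)
    (hmono' : ∀ x ∉ B, ∀ y ∉ B, x ≤ y → σ x ≤ σ y)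
    (hAC : galeL inferInstance A C) :
    galeL (LinearOrder.lift' (fun x => σ.symm x) σ.symm.injective) A C :=
  gale_shuffle_transport_general A B C hBA σ hmap hmono hmap' hmono' hAC
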